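/- arXiv:1910.14639 — 4 statements merged into one kernel-verified Lean document; each statement's English description precedes it below -/
import Mathlib

section
/- Let $\mathcal{A}$ be a finite-dimensional associative unital $\Bbbk$-algebra with Jacobson radical $\mathcal{J}$, let $\mathcal{D}$ be a subalgebra with $\mathcal{A} = \mathcal{D} \oplus \mathcal{J}$, let $\mathcal{I} \subseteq \mathcal{J}$ be an ideal of $\mathcal{A}$, and let $\vartheta : (1+\mathcal{I}) \to \mathbb{C}^\times$ be a group homomorphism from the multiplicative group $1+\mathcal{I}$. Then the set $\mathcal{D}_\vartheta = \{ d \in \mathcal{D} : \vartheta(1+ad) = \vartheta(1+da) \text{ for all } a \in \mathcal{I} \}$ is a subalgebra of $\mathcal{D}$ (closed under addition, multiplication, scalar multiplication, and containing $1$). -/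
private lemma jac_inv_exists {R : Type*} [Ring R] {x : R}
    (hx : x ∈ Ideal.jacobson (⊥ : Ideal R)) :
    ∃ u : R, (1 + x) * u = 1 ∧ u * (1 + x) = 1 := by
  obtain ⟨s, hs⟩ := Ideal.exists_mul_add_sub_mem_of_mem_jacobson x hx
  rw [Ideal.mem_bot, sub_eq_zero] at hs
  have hy : s - 1 ∈ Ideal.jacobson (⊥ : Ideal R) := by
    have h1 : s - 1 = -(s * x) := by rw [← hs]; noncomm_ring
    rw [h1]
    exact neg_mem (Ideal.mul_mem_left _ s hx)
  obtain ⟨t, ht⟩ := Ideal.exists_mul_add_sub_mem_of_mem_jacobson _ hy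
  rw [Ideal.mem_bot, sub_eq_zero, sub_add_cancel] at ht
  have hts : t = x + 1 := by
    calc t = t * (s * (x + 1)) := by rw [hs, mul_one]
    _ = (t * s) * (x + 1) := by rw [mul_assoc]
    _ = x + 1 := by rw [ht, one_mul]
  refine ⟨s, ?_, ?_⟩
  · rw [add_comm, ← hts, ht]
  · rw [add_comm, hs]

/-- Let `A = D ⊕ J` with `J` the Jacobson radical and `D` a complementary subalgebra, let
`I ⊆ J` be a two-sided ideal of `A`, and let `θ` be multiplicative on the group `1 + I`.
Then `D_θ = {d ∈ D | θ(1 + a d) = θ(1 + d a) for all a ∈ I}` is a subalgebra of `D`. -/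
theorem stabiliser_diagonal_is_subalgebra
    (k A : Type*) [Field k] [Ring A] [Algebra k A] [FiniteDimensional k A]
    (D : Subalgebra k A)
    (hDcompl : ∀ a : A, ∃ d ∈ D, a - d ∈ Ideal.jacobson (⊥ : Ideal A))
    (hDdisj : ∀ d ∈ D, d ∈ Ideal.jacobson (⊥ : Ideal A) → d = 0)
    (I : Ideal A) (hIJ : I ≤ Ideal.jacobson (⊥ : Ideal A))
    (hItwo : ∀ a ∈ I, ∀ b : A, a * b ∈ I ∧ b * a ∈ I)
    (θ : A → ℂˣ)
    (hθ : ∀ x y : A, x - 1 ∈ I → y - 1 ∈ I → θ (x * y) = θ x * θ y) :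
    ∃ B : Subalgebra k A, (B : Set A) =
      {d : A | d ∈ D ∧ ∀ a ∈ I, θ (1 + a * d) = θ (1 + d * a)} := by
  refine ⟨{ carrier := {d : A | d ∈ D ∧ ∀ a ∈ I, θ (1 + a * d) = θ (1 + d * a)},
            mul_mem' := ?_, one_mem' := ?_, add_mem' := ?_, zero_mem' := ?_,
            algebraMap_mem' := ?_ }, rfl⟩
  · -- mul_mem'
    rintro x y ⟨hxD, hx⟩ ⟨hyD, hy⟩
    refine ⟨D.mul_mem hxD hyD, fun a ha => ?_⟩
    calc θ (1 + a * (x * y)) = θ (1 + (a * x) * y) := by rw [mul_assoc]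
    _ = θ (1 + y * (a * x)) := hy _ ((hItwo a ha x).1)
    _ = θ (1 + (y * a) * x) := by rw [mul_assoc]
    _ = θ (1 + x * (y * a)) := hx _ ((hItwo a ha y).2)
    _ = θ (1 + (x * y) * a) := by rw [← mul_assoc]
  · -- one_mem'
    exact ⟨D.one_mem, fun a _ => by rw [mul_one, one_mul]⟩
  · -- add_mem'
    rintro x y ⟨hxD, hx⟩ ⟨hyD, hy⟩
    refine ⟨D.add_mem hxD hyD, fun a ha => ?_⟩
    obtain ⟨u, hu1, hu2⟩ := jac_inv_exists (hIJ ((hItwo a ha x).2))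
    -- hu1 : (1 + x*a) * u = 1, hu2 : u * (1 + x*a) = 1
    have ha₁ : a * u ∈ I := (hItwo a ha u).1
    have key1 : (1 + a * x) * (1 + (a * u) * y) = 1 + a * (x + y) := by
      have h : a * ((1 + x * a) * u) * y = a * y := by rw [hu1, mul_one]
      calc (1 + a * x) * (1 + (a * u) * y)
          = 1 + a * x + a * ((1 + x * a) * u) * y := by noncomm_ring
      _ = 1 + a * x + a * y := by rw [h]
      _ = 1 + a * (x + y) := by noncomm_ring
    have key2 : (1 + y * (a * u)) * (1 + x * a) = 1 + (x + y) * a := by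
      have h : y * (a * (u * (1 + x * a))) = y * a := by rw [hu2, mul_one]
      calc (1 + y * (a * u)) * (1 + x * a)
          = 1 + x * a + y * (a * (u * (1 + x * a))) := by noncomm_ring
      _ = 1 + x * a + y * a := by rw [h]
      _ = 1 + (x + y) * a := by noncomm_ring
    calc θ (1 + a * (x + y)) = θ ((1 + a * x) * (1 + (a * u) * y)) := by rw [key1]
    _ = θ (1 + a * x) * θ (1 + (a * u) * y) :=
        hθ _ _ (by simpa using (hItwo a ha x).1) (by simpa using (hItwo _ ha₁ y).1)
    _ = θ (1 + x * a) * θ (1 + y * (a * u)) := by rw [hx a ha, hy _ ha₁]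
    _ = θ (1 + y * (a * u)) * θ (1 + x * a) := mul_comm _ _
    _ = θ ((1 + y * (a * u)) * (1 + x * a)) :=
        (hθ _ _ (by simpa using (hItwo _ ha₁ y).2) (by simpa using (hItwo a ha x).2)).symm
    _ = θ (1 + (x + y) * a) := by rw [key2]
  · -- zero_mem'
    exact ⟨D.zero_mem, fun a _ => by rw [mul_zero, zero_mul]⟩
  · -- algebraMap_mem'
    intro c
    exact ⟨D.algebraMap_mem c, fun a _ => by rw [Algebra.commutes]⟩
end

section
/- Let $\mathcal{A}$ be a finite-dimensional unital $\Bbbk$-algebra with Jacobson radical $\mathcal{J}$, $\mathcal{D}$ a subalgebra with $\mathcal{A} = \mathcal{D} \oplus \mathcal{J}$, $\mathcal{I} \subseteq \mathcal{J}$ an ideal of $\mathcal{A}$, and $\vartheta : 1+\mathcal{I} \to \mathbb{C}^\times$ a group homomorphism. Then the group of units of the subalgebra $\mathcal{D}_\vartheta = \{ d \in \mathcal{D} : \vartheta(1+ad) = \vartheta(1+da) \text{ for all } a \in \mathcal{I} \}$ equals the stabiliser $T_\vartheta = \{ t \in \mathcal{D}^\times : \vartheta(t x t^{-1}) = \vartheta(x)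 \text{ for all } x \in 1+\mathcal{I} \}$ of $\vartheta$ under the conjugation action of $T = \mathcal{D}^\times$. -/
/-- With `A = D ⊕ J`, `I ⊆ J` a two-sided ideal of `A` and `θ` multiplicative on `1 + I`,
the units of the subalgebra `D_θ = {d ∈ D | θ(1 + a d) = θ(1 + d a) for all a ∈ I}` are
exactly the elements of `T = Dˣ` fixing `θ` under conjugation. -/
theorem units_of_stabiliser_subalgebra_eq_stabiliser
    (k A : Type*) [Field k] [Ring A] [Algebra k A] [FiniteDimensional k A]
    (D : Subalgebra k A)
    (hDcompl : ∀ a : A, ∃ d ∈ D, a - d ∈ Ideal.jacobson (⊥ : Ideal A))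
    (hDdisj : ∀ d ∈ D, d ∈ Ideal.jacobson (⊥ : Ideal A) → d = 0)
    (I : Ideal A) (hIJ : I ≤ Ideal.jacobson (⊥ : Ideal A))
    (hItwo : ∀ a ∈ I, ∀ b : A, a * b ∈ I ∧ b * a ∈ I)
    (θ : A → ℂˣ)
    (hθ : ∀ x y : A, x - 1 ∈ I → y - 1 ∈ I → θ (x * y) = θ x * θ y) :
    ∀ t : Aˣ,
      (((t : A) ∈ D ∧ ∀ a ∈ I, θ (1 + a * (t : A)) = θ (1 + (t : A) * a)) ∧
        ((↑t⁻¹ : A) ∈ D ∧ ∀ a ∈ I, θ (1 + a * (↑t⁻¹ : A)) = θ (1 + (↑t⁻¹ : A) * a)))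
      ↔ ((t : A) ∈ D ∧ (↑t⁻¹ : A) ∈ D ∧
          ∀ x : A, x - 1 ∈ I → θ ((t : A) * x * (↑t⁻¹ : A)) = θ x) := by
  intro t
  constructor
  · rintro ⟨⟨htD, htθ⟩, htiD, -⟩
    refine ⟨htD, htiD, ?_⟩
    intro x hx
    have hmem : (x - 1) * (↑t⁻¹ : A) ∈ I := (hItwo _ hx _).1
    have h := htθ _ hmem
    have e1 : (1 : A) + (x - 1) * ↑t⁻¹ * ↑t = x := by
      rw [Units.inv_mul_cancel_right]; abel
    have e2 : (1 : A) + (t : A) * ((x - 1) * ↑t⁻¹) = (t : A) * x * ↑t⁻¹ := by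
      rw [← mul_assoc, mul_sub, mul_one, sub_mul, t.mul_inv]; abel
    rw [e1, e2] at h
    exact h.symm
  · rintro ⟨htD, htiD, hconj⟩
    refine ⟨⟨htD, ?_⟩, htiD, ?_⟩
    · intro a ha
      have hmem : a * (t : A) ∈ I := (hItwo a ha _).1
      have h := hconj (1 + a * (t : A)) (by simpa using hmem)
      have e : (t : A) * (1 + a * ↑t) * ↑t⁻¹ = 1 + ↑t * a := by
        rw [mul_add, mul_one, add_mul, t.mul_inv, ← mul_assoc,
          Units.mul_inv_cancel_right]
      rw [e] at h
      exact h.symm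
    · intro a ha
      have hmem : (↑t⁻¹ : A) * a ∈ I := (hItwo a ha _).2
      have h := hconj (1 + (↑t⁻¹ : A) * a) (by simpa using hmem)
      have e : (t : A) * (1 + (↑t⁻¹ : A) * a) * ↑t⁻¹ = 1 + a * ↑t⁻¹ := by
        rw [mul_add, mul_one, ← mul_assoc ((t : A)), t.mul_inv, one_mul, add_mul,
          t.mul_inv]
      rw [e] at h
      exact h
end

section
/- Let $\mathcal{J}$ be a nilpotent associative algebra over a field, let $n \ge 2$ with $\mathcal{J}^n \ne 0$, and let $\varsigma : 1+\mathcal{J}^n \to \mathbb{C}^\times$ be a $(1+\mathcal{J})$-invariant homomorphism. For $a \in \mathcal{J}$, $\alpha \in \Bbbk$, and $u \in \mathcal{J}^{n-1}$, one has $\varsigma([1+\alpha a, 1+u]) = \varsigma([1+a, 1+\alpha u])$. -/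
/-- Let `J` be a nilpotent two-sided ideal of an algebra `A`, `n ≥ 2` with `Jⁿ ≠ 0`, and let
`ς` be a `(1+J)`-invariant character of `1 + Jⁿ`.  Then for `a ∈ J`, `α ∈ k` and
`u ∈ Jⁿ⁻¹` one has `ς([1 + α a, 1 + u]) = ς([1 + a, 1 + α u])`. -/
theorem sigma_commutator_scalar_swap
    (k A : Type*) [Field k] [Ring A] [Algebra k A] [FiniteDimensional k A]
    (J : Submodule k A) (hJtwo : ∀ a ∈ J, ∀ b : A, a * b ∈ J ∧ b * a ∈ J)
    (hJnil : ∃ m : ℕ, J ^ m = ⊥)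
    (n : ℕ) (hn : 2 ≤ n) (hJn : J ^ n ≠ ⊥)
    (ς : Aˣ → ℂˣ)
    (hςhom : ∀ x y : Aˣ, (↑x : A) - 1 ∈ J ^ n → (↑y : A) - 1 ∈ J ^ n →
      ς (x * y) = ς x * ς y)
    (hςinv : ∀ g x : Aˣ, (↑g : A) - 1 ∈ J → (↑x : A) - 1 ∈ J ^ n →
      ς (g * x * g⁻¹) = ς x) :
    ∀ (a : A), a ∈ J → ∀ (α : k) (u : A), u ∈ J ^ (n - 1) →
      ∀ x y x' y' : Aˣ, (↑x : A) = 1 + α • a → (↑y : A) = 1 + u →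
        (↑x' : A) = 1 + a → (↑y' : A) = 1 + α • u →
        ς (x⁻¹ * y⁻¹ * x * y) = ς (x'⁻¹ * y'⁻¹ * x' * y') := by
  obtain ⟨m, rfl⟩ : ∃ m, n = m + 2 := ⟨n - 2, by omega⟩
  intro a ha α u hu x y x' y' hx hy hx' hy'
  have hu1 : u ∈ J ^ (m + 1) := by simpa using hu
  -- ideal closure lemmas
  have hL : ∀ (l : ℕ) (b : A), ∀ w ∈ J ^ (l + 1), b * w ∈ J ^ (l + 1) := by
    intro l b w hw
    rw [pow_succ'] at hw ⊢
    refine Submodule.mul_induction_on hw (fun j hj v hv => ?_) (fun s t hs ht => ?_)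
    · rw [← mul_assoc]; exact Submodule.mul_mem_mul (hJtwo j hj b).2 hv
    · rw [mul_add]; exact add_mem hs ht
  have hR : ∀ (l : ℕ) (b : A), ∀ w ∈ J ^ (l + 1), w * b ∈ J ^ (l + 1) := by
    intro l b w hw
    rw [pow_succ] at hw ⊢
    refine Submodule.mul_induction_on hw (fun v hv j hj => ?_) (fun s t hs ht => ?_)
    · rw [mul_assoc]; exact Submodule.mul_mem_mul hv (hJtwo j hj b).1
    · rw [add_mul]; exact add_mem hs ht
  have hJle : ∀ (l : ℕ) (w : A), w ∈ J ^ (l + 1) → w ∈ J := by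
    intro l w hw
    rw [pow_succ] at hw
    exact Submodule.mul_induction_on hw (fun v _ j hj => (hJtwo j hj v).2)
      (fun s t hs ht => add_mem hs ht)
  have huJ : u ∈ J := hJle m u hu1
  have hau : a * u ∈ J ^ (m + 2) := by
    rw [pow_succ']; exact Submodule.mul_mem_mul ha hu1
  have hua : u * a ∈ J ^ (m + 2) := by
    rw [pow_succ]; exact Submodule.mul_mem_mul hu1 ha
  -- units of the form 1 + J
  have hunit : ∀ w ∈ J, ∃ g : Aˣ, (g : A) = 1 + w := by
    intro w hw
    obtain ⟨m0, hm0⟩ := hJnil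
    have hwn : IsNilpotent w := ⟨m0, by
      have h1 : w ^ m0 ∈ J ^ m0 := J.pow_mem_pow hw m0
      rw [hm0] at h1
      simpa using h1⟩
    obtain ⟨g, hg⟩ := hwn.isUnit_one_add
    exact ⟨g, hg⟩
  -- basic facts about ς
  have hzero : ((1 : Aˣ) : A) - 1 ∈ J ^ (m + 2) := by simp
  have hone : ς 1 = 1 := by
    have h := hςhom 1 1 hzero hzero
    rw [mul_one] at h
    exact left_eq_mul.mp h
  have hNinv : ∀ z : Aˣ, ((z : A) - 1 ∈ J ^ (m + 2)) → ((z⁻¹ : Aˣ) : A) - 1 ∈ J ^ (m + 2) := by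
    intro z hz
    have e : ((z⁻¹ : Aˣ) : A) - 1 = -(((z⁻¹ : Aˣ) : A) * ((z : A) - 1)) := by
      rw [mul_sub, mul_one, Units.inv_mul, neg_sub]
    rw [e]; exact neg_mem (hL _ _ _ hz)
  have hJinv : ∀ g : Aˣ, ((g : A) - 1 ∈ J) → ((g⁻¹ : Aˣ) : A) - 1 ∈ J := by
    intro g hg
    have e : ((g⁻¹ : Aˣ) : A) - 1 = -(((g⁻¹ : Aˣ) : A) * ((g : A) - 1)) := by
      rw [mul_sub, mul_one, Units.inv_mul, neg_sub]
    rw [e]; exact neg_mem (hJtwo _ hg _).2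
  have hinv : ∀ z : Aˣ, ((z : A) - 1 ∈ J ^ (m + 2)) → ς z⁻¹ = (ς z)⁻¹ := by
    intro z hz
    have h := hςhom z z⁻¹ hz (hNinv z hz)
    rw [mul_inv_cancel, hone] at h
    exact eq_inv_of_mul_eq_one_right h.symm
  have hJmul : ∀ p q : Aˣ, ((p : A) - 1 ∈ J) → ((q : A) - 1 ∈ J) →
      (((p * q : Aˣ) : A) - 1 ∈ J) := by
    intro p q hp hq
    have e : ((p * q : Aˣ) : A) - 1
        = ((p : A) - 1) * ((q : A) - 1) + ((p : A) - 1) + ((q : A) - 1) := by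
      rw [Units.val_mul]; noncomm_ring
    rw [e]
    exact add_mem (add_mem (hJtwo _ hp _).1 hp) hq
  have hcommN : ∀ p q : Aˣ, ((p : A) * (q : A) - (q : A) * (p : A) ∈ J ^ (m + 2)) →
      ((p⁻¹ * q⁻¹ * p * q : Aˣ) : A) - 1 ∈ J ^ (m + 2) := by
    intro p q hpq
    have e : ((p⁻¹ * q⁻¹ * p * q : Aˣ) : A) - 1
        = ((p⁻¹ : Aˣ) : A) * (((q⁻¹ : Aˣ) : A) * ((p : A) * (q : A) - (q : A) * (p : A))) := by
      simp only [Units.val_mul, mul_sub, ← mul_assoc]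
      rw [mul_assoc ((p⁻¹ : Aˣ) : A) ((q⁻¹ : Aˣ) : A) ((q : A)), Units.inv_mul, mul_one,
        Units.inv_mul]
    rw [e]; exact hL _ _ _ (hL _ _ _ hpq)
  have hconjmem : ∀ q w : Aˣ, ((w : A) - 1 ∈ J ^ (m + 2)) →
      ((q⁻¹ * w * q : Aˣ) : A) - 1 ∈ J ^ (m + 2) := by
    intro q w hw
    have e : ((q⁻¹ * w * q : Aˣ) : A) - 1 = ((q⁻¹ : Aˣ) : A) * ((w : A) - 1) * (q : A) := by
      simp only [Units.val_mul]
      rw [mul_sub, mul_one, sub_mul, Units.inv_mul]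
    rw [e]; exact hR _ _ _ (hL _ _ _ hw)
  have hcommz : ∀ p q : Aˣ, ((p : A) - 1 ∈ J ^ (m + 2)) →
      ((p : A) * (q : A) - (q : A) * (p : A) ∈ J ^ (m + 2)) := by
    intro p q hp
    have e : (p : A) * (q : A) - (q : A) * (p : A)
        = ((p : A) - 1) * (q : A) - (q : A) * ((p : A) - 1) := by noncomm_ring
    rw [e]; exact sub_mem (hR _ _ _ hp) (hL _ _ _ hp)
  -- expansion lemmas
  have E1 : ∀ p q h : Aˣ, ((q : A) - 1 ∈ J) →
      (((p⁻¹ * h⁻¹ * p * h : Aˣ) : A) - 1 ∈ J ^ (m + 2)) →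
      (((q⁻¹ * h⁻¹ * q * h : Aˣ) : A) - 1 ∈ J ^ (m + 2)) →
      ς ((p * q)⁻¹ * h⁻¹ * (p * q) * h) = ς (p⁻¹ * h⁻¹ * p * h) * ς (q⁻¹ * h⁻¹ * q * h) := by
    intro p q h hq h1 h2
    have hid : ((p * q)⁻¹ * h⁻¹ * (p * q) * h : Aˣ)
        = (q⁻¹ * (p⁻¹ * h⁻¹ * p * h) * q) * (q⁻¹ * h⁻¹ * q * h) := by group
    rw [hid, hςhom _ _ (hconjmem q _ h1) h2]
    have hc := hςinv q⁻¹ (p⁻¹ * h⁻¹ * p * h) (hJinv q hq) h1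
    rw [inv_inv] at hc
    rw [hc]
  have E2 : ∀ g h₁ h₂ : Aˣ, ((h₂ : A) - 1 ∈ J) →
      (((g⁻¹ * h₁⁻¹ * g * h₁ : Aˣ) : A) - 1 ∈ J ^ (m + 2)) →
      (((g⁻¹ * h₂⁻¹ * g * h₂ : Aˣ) : A) - 1 ∈ J ^ (m + 2)) →
      ς (g⁻¹ * (h₁ * h₂)⁻¹ * g * (h₁ * h₂))
        = ς (g⁻¹ * h₁⁻¹ * g * h₁) * ς (g⁻¹ * h₂⁻¹ * g * h₂) := by
    intro g h₁ h₂ hh2 hc1 hc2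
    have hid : (g⁻¹ * (h₁ * h₂)⁻¹ * g * (h₁ * h₂) : Aˣ)
        = (g⁻¹ * h₂⁻¹ * g * h₂) * (h₂⁻¹ * (g⁻¹ * h₁⁻¹ * g * h₁) * h₂) := by group
    rw [hid, hςhom _ _ hc2 (hconjmem h₂ _ hc1)]
    have hc := hςinv h₂⁻¹ (g⁻¹ * h₁⁻¹ * g * h₁) (hJinv h₂ hh2) hc1
    rw [inv_inv] at hc
    rw [hc, mul_comm]
  have htriv2 : ∀ g z : Aˣ, ((g : A) - 1 ∈ J) → ((z : A) - 1 ∈ J ^ (m + 2)) →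
      ς (g⁻¹ * z⁻¹ * g * z) = 1 := by
    intro g z hg hz
    have hzi := hNinv z hz
    have h1 : ς ((g⁻¹ * z⁻¹ * g) * z) = ς (g⁻¹ * z⁻¹ * g) * ς z :=
      hςhom _ _ (hconjmem g z⁻¹ hzi) hz
    have h2 : ς (g⁻¹ * z⁻¹ * g) = ς z⁻¹ := by
      have hc := hςinv g⁻¹ z⁻¹ (hJinv g hg) hzi
      rwa [inv_inv] at hc
    calc ς (g⁻¹ * z⁻¹ * g * z) = ς (g⁻¹ * z⁻¹ * g) * ς z := h1
      _ = (ς z)⁻¹ * ς z := by rw [h2, hinv z hz]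
      _ = 1 := inv_mul_cancel _
  have htriv1 : ∀ g z : Aˣ, ((g : A) - 1 ∈ J) → ((z : A) - 1 ∈ J ^ (m + 2)) →
      ς (z⁻¹ * g⁻¹ * z * g) = 1 := by
    intro g z hg hz
    have hzg : ((g⁻¹ * z⁻¹ * g * z : Aˣ) : A) - 1 ∈ J ^ (m + 2) := by
      apply hcommN
      have e : (g : A) * (z : A) - (z : A) * (g : A)
          = (g : A) * ((z : A) - 1) - ((z : A) - 1) * (g : A) := by noncomm_ring
      rw [e]; exact sub_mem (hL _ _ _ hz) (hR _ _ _ hz)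
    have hidz : (z⁻¹ * g⁻¹ * z * g : Aˣ) = (g⁻¹ * z⁻¹ * g * z)⁻¹ := by group
    rw [hidz, hinv _ hzg, htriv2 g z hg hz, inv_one]
  -- membership facts for the given units
  have hxJ : (x : A) - 1 ∈ J := by
    rw [hx, add_sub_cancel_left]; exact Submodule.smul_mem _ _ ha
  have hyJ : (y : A) - 1 ∈ J := by rw [hy, add_sub_cancel_left]; exact huJ
  have hx'J : (x' : A) - 1 ∈ J := by rw [hx', add_sub_cancel_left]; exact ha
  have hy'J : (y' : A) - 1 ∈ J := by
    rw [hy', add_sub_cancel_left]; exact Submodule.smul_mem _ _ huJ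
  -- the auxiliary commuting units X = 1 + α(a+u), Y = 1 + (a+u)
  obtain ⟨X, hX⟩ := hunit (α • (a + u)) (Submodule.smul_mem _ _ (add_mem ha huJ))
  obtain ⟨Y, hY⟩ := hunit (a + u) (add_mem ha huJ)
  have hYJ : (Y : A) - 1 ∈ J := by rw [hY, add_sub_cancel_left]; exact add_mem ha huJ
  have hXY : X * Y = Y * X := by
    apply Units.ext
    rw [Units.val_mul, Units.val_mul, hX, hY]
    simp only [smul_add, mul_add, add_mul, mul_one, one_mul, smul_mul_assoc, mul_smul_comm,
      smul_smul, mul_assoc]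
    abel
  have hxx' : x * x' = x' * x := by
    apply Units.ext
    rw [Units.val_mul, Units.val_mul, hx, hx']
    simp only [smul_add, mul_add, add_mul, mul_one, one_mul, smul_mul_assoc, mul_smul_comm, mul_assoc]
    abel
  have hyy' : y * y' = y' * y := by
    apply Units.ext
    rw [Units.val_mul, Units.val_mul, hy, hy']
    simp only [smul_add, mul_add, add_mul, mul_one, one_mul, smul_mul_assoc, mul_smul_comm, mul_assoc]
    abel
  -- the correction elements z₁, z₂ in 1 + Jⁿ
  set z₁ : Aˣ := (x * y')⁻¹ * X with hz₁def
  set z₂ : Aˣ := (x' * y)⁻¹ * Y with hz₂def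
  have hXfac : X = (x * y') * z₁ := by rw [hz₁def]; group
  have hYfac : Y = (x' * y) * z₂ := by rw [hz₂def]; group
  have hz₁N : (z₁ : A) - 1 ∈ J ^ (m + 2) := by
    have e1 : (z₁ : A) - 1 = (((x * y')⁻¹ : Aˣ) : A) * ((X : A) - ((x * y' : Aˣ) : A)) := by
      rw [hz₁def, Units.val_mul, mul_sub, Units.inv_mul]
    have e2 : (X : A) - ((x * y' : Aˣ) : A) = -((α * α) • (a * u)) := by
      rw [hX, Units.val_mul, hx, hy']
      simp only [smul_add, mul_add, add_mul, mul_one, one_mul, smul_mul_assoc, mul_smul_comm,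
        smul_smul, mul_assoc]
      abel
    rw [e1, e2]
    exact hL _ _ _ (neg_mem (Submodule.smul_mem _ _ hau))
  have hz₂N : (z₂ : A) - 1 ∈ J ^ (m + 2) := by
    have e1 : (z₂ : A) - 1 = (((x' * y)⁻¹ : Aˣ) : A) * ((Y : A) - ((x' * y : Aˣ) : A)) := by
      rw [hz₂def, Units.val_mul, mul_sub, Units.inv_mul]
    have e2 : (Y : A) - ((x' * y : Aˣ) : A) = -(a * u) := by
      rw [hY, Units.val_mul, hx', hy]
      simp only [mul_add, add_mul, mul_one, one_mul, mul_assoc]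
      abel
    rw [e1, e2]
    exact hL _ _ _ (neg_mem hau)
  have hz₁J : (z₁ : A) - 1 ∈ J := hJle (m + 1) _ hz₁N
  have hz₂J : (z₂ : A) - 1 ∈ J := hJle (m + 1) _ hz₂N
  have hxy'J : ((x * y' : Aˣ) : A) - 1 ∈ J := hJmul x y' hxJ hy'J
  -- membership helpers for products inside J^n
  have hauu : a * (u * u) ∈ J ^ (m + 2) := by
    have h := hR (m + 1) u _ hau
    rwa [mul_assoc] at h
  have haau : a * (a * u) ∈ J ^ (m + 2) := hL _ _ _ hau
  have haua : a * (u * a) ∈ J ^ (m + 2) := hL _ _ _ hua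
  have huau : u * (a * u) ∈ J ^ (m + 2) := hL _ _ _ hau
  -- commutator difference computations
  have hDxy : (x : A) * (y : A) - (y : A) * (x : A) ∈ J ^ (m + 2) := by
    have e : (x : A) * (y : A) - (y : A) * (x : A) = α • (a * u) - α • (u * a) := by
      rw [hx, hy]
      simp only [smul_add, mul_add, add_mul, mul_one, one_mul, smul_mul_assoc, mul_smul_comm, mul_assoc]
      abel
    rw [e]; exact sub_mem (Submodule.smul_mem _ _ hau) (Submodule.smul_mem _ _ hua)
  have hDx'y' : (x' : A) * (y' : A) - (y' : A) * (x' : A) ∈ J ^ (m + 2) := by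
    have e : (x' : A) * (y' : A) - (y' : A) * (x' : A) = α • (a * u) - α • (u * a) := by
      rw [hx', hy']
      simp only [smul_add, mul_add, add_mul, mul_one, one_mul, smul_mul_assoc, mul_smul_comm, mul_assoc]
      abel
    rw [e]; exact sub_mem (Submodule.smul_mem _ _ hau) (Submodule.smul_mem _ _ hua)
  have hDy'x' : (y' : A) * (x' : A) - (x' : A) * (y' : A) ∈ J ^ (m + 2) := by
    have e : (y' : A) * (x' : A) - (x' : A) * (y' : A) = α • (u * a) - α • (a * u) := by
      rw [hx', hy']
      simp only [smul_add, mul_add, add_mul, mul_one, one_mul, smul_mul_assoc, mul_smul_comm, mul_assoc]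
      abel
    rw [e]; exact sub_mem (Submodule.smul_mem _ _ hua) (Submodule.smul_mem _ _ hau)
  have hD7 : (x : A) * ((x' * y : Aˣ) : A) - ((x' * y : Aˣ) : A) * (x : A) ∈ J ^ (m + 2) := by
    have e : (x : A) * ((x' * y : Aˣ) : A) - ((x' * y : Aˣ) : A) * (x : A)
        = α • (a * u) + α • (a * (a * u)) - α • (u * a) - α • (a * (u * a)) := by
      rw [Units.val_mul, hx, hx', hy]
      simp only [smul_add, mul_add, add_mul, mul_one, one_mul, smul_mul_assoc, mul_smul_comm, mul_assoc]
      abel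
    rw [e]
    exact sub_mem (sub_mem (add_mem (Submodule.smul_mem _ _ hau) (Submodule.smul_mem _ _ haau))
      (Submodule.smul_mem _ _ hua)) (Submodule.smul_mem _ _ haua)
  have hD8 : (y' : A) * ((x' * y : Aˣ) : A) - ((x' * y : Aˣ) : A) * (y' : A) ∈ J ^ (m + 2) := by
    have e : (y' : A) * ((x' * y : Aˣ) : A) - ((x' * y : Aˣ) : A) * (y' : A)
        = α • (u * a) + α • (u * (a * u)) - α • (a * u) - α • (a * (u * u)) := by
      rw [Units.val_mul, hy', hx', hy]
      simp only [smul_add, mul_add, add_mul, mul_one, one_mul, smul_mul_assoc, mul_smul_comm, mul_assoc]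
      abel
    rw [e]
    exact sub_mem (sub_mem (add_mem (Submodule.smul_mem _ _ hua) (Submodule.smul_mem _ _ huau))
      (Submodule.smul_mem _ _ hau)) (Submodule.smul_mem _ _ hauu)
  have hD9 : ((x * y' : Aˣ) : A) * (Y : A) - (Y : A) * ((x * y' : Aˣ) : A) ∈ J ^ (m + 2) := by
    have e : ((x * y' : Aˣ) : A) * (Y : A) - (Y : A) * ((x * y' : Aˣ) : A)
        = (α * α) • (a * (u * a)) + (α * α) • (a * (u * u))
          - (α * α) • (a * (a * u)) - (α * α) • (u * (a * u)) := by
      rw [Units.val_mul, hx, hy', hY]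
      simp only [smul_add, mul_add, add_mul, mul_one, one_mul, smul_mul_assoc, mul_smul_comm,
        smul_smul, mul_assoc]
      abel
    rw [e]
    exact sub_mem (sub_mem (add_mem (Submodule.smul_mem _ _ haua) (Submodule.smul_mem _ _ hauu))
      (Submodule.smul_mem _ _ haau)) (Submodule.smul_mem _ _ huau)
  have hD10 : ((x * y' : Aˣ) : A) * ((x' * y : Aˣ) : A)
      - ((x' * y : Aˣ) : A) * ((x * y' : Aˣ) : A) ∈ J ^ (m + 2) := by
    have e : ((x * y' : Aˣ) : A) * ((x' * y : Aˣ) : A)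
        - ((x' * y : Aˣ) : A) * ((x * y' : Aˣ) : A)
        = α • (a * (a * u)) + α • (u * (a * u)) + (α * α) • (a * (u * a))
            + (α * α) • (a * (u * u))
          - (α * α) • (a * (a * u)) - (α * α) • (u * (a * u)) - α • (a * (u * a))
            - α • (a * (u * u)) := by
      rw [Units.val_mul, Units.val_mul, hx, hy', hx', hy]
      simp only [smul_add, mul_add, add_mul, mul_one, one_mul, smul_mul_assoc, mul_smul_comm,
        smul_smul, mul_assoc]
      abel
    rw [e]
    refine sub_mem (sub_mem (sub_mem (sub_mem ?_ ?_) ?_) ?_) ?_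
    · exact add_mem (add_mem (add_mem (Submodule.smul_mem _ _ haau)
        (Submodule.smul_mem _ _ huau)) (Submodule.smul_mem _ _ haua))
        (Submodule.smul_mem _ _ hauu)
    · exact Submodule.smul_mem _ _ haau
    · exact Submodule.smul_mem _ _ huau
    · exact Submodule.smul_mem _ _ haua
    · exact Submodule.smul_mem _ _ hauu
  have hDgz₂ : ((x * y' : Aˣ) : A) * (z₂ : A) - (z₂ : A) * ((x * y' : Aˣ) : A) ∈ J ^ (m + 2) := by
    have h := neg_mem (hcommz z₂ (x * y') hz₂N)
    rwa [neg_sub] at h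
  -- trivial commutators
  have hMxx'1 : (x⁻¹ * x'⁻¹ * x * x' : Aˣ) = 1 := by
    rw [mul_assoc, hxx']
    group
  have hMyy'1 : (y'⁻¹ * y⁻¹ * y' * y : Aˣ) = 1 := by
    rw [mul_assoc, ← hyy']
    group
  have hMxx'N : ((x⁻¹ * x'⁻¹ * x * x' : Aˣ) : A) - 1 ∈ J ^ (m + 2) := by
    rw [hMxx'1]; simp
  have hMyy'N : ((y'⁻¹ * y⁻¹ * y' * y : Aˣ) : A) - 1 ∈ J ^ (m + 2) := by
    rw [hMyy'1]; simp
  -- the main chain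
  have t0 : ς (X⁻¹ * Y⁻¹ * X * Y) = 1 := by
    have e : (X⁻¹ * Y⁻¹ * X * Y : Aˣ) = 1 := by
      rw [mul_assoc, hXY]
      group
    rw [e, hone]
  have t1 : ς (X⁻¹ * Y⁻¹ * X * Y)
      = ς ((x * y')⁻¹ * Y⁻¹ * (x * y') * Y) * ς (z₁⁻¹ * Y⁻¹ * z₁ * Y) := by
    conv_lhs => rw [hXfac]
    exact E1 (x * y') z₁ Y hz₁J (hcommN _ _ hD9) (hcommN _ _ (hcommz z₁ Y hz₁N))
  have t1' : ς (z₁⁻¹ * Y⁻¹ * z₁ * Y) = 1 := htriv1 Y z₁ hYJ hz₁N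
  have t2 : ς ((x * y')⁻¹ * Y⁻¹ * (x * y') * Y)
      = ς ((x * y')⁻¹ * (x' * y)⁻¹ * (x * y') * (x' * y))
        * ς ((x * y')⁻¹ * z₂⁻¹ * (x * y') * z₂) := by
    conv_lhs => rw [hYfac]
    exact E2 (x * y') (x' * y) z₂ hz₂J (hcommN _ _ hD10) (hcommN _ _ hDgz₂)
  have t2' : ς ((x * y')⁻¹ * z₂⁻¹ * (x * y') * z₂) = 1 := htriv2 (x * y') z₂ hxy'J hz₂N
  have t3 : ς ((x * y')⁻¹ * (x' * y)⁻¹ * (x * y') * (x' * y))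
      = ς (x⁻¹ * (x' * y)⁻¹ * x * (x' * y)) * ς (y'⁻¹ * (x' * y)⁻¹ * y' * (x' * y)) :=
    E1 x y' (x' * y) hy'J (hcommN _ _ hD7) (hcommN _ _ hD8)
  have t4 : ς (x⁻¹ * (x' * y)⁻¹ * x * (x' * y))
      = ς (x⁻¹ * x'⁻¹ * x * x') * ς (x⁻¹ * y⁻¹ * x * y) :=
    E2 x x' y hyJ hMxx'N (hcommN _ _ hDxy)
  have t4' : ς (x⁻¹ * x'⁻¹ * x * x') = 1 := by rw [hMxx'1, hone]
  have t5 : ς (y'⁻¹ * (x' * y)⁻¹ * y' * (x' * y))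
      = ς (y'⁻¹ * x'⁻¹ * y' * x') * ς (y'⁻¹ * y⁻¹ * y' * y) :=
    E2 y' x' y hyJ (hcommN _ _ hDy'x') hMyy'N
  have t5' : ς (y'⁻¹ * y⁻¹ * y' * y) = 1 := by rw [hMyy'1, hone]
  have t6 : ς (y'⁻¹ * x'⁻¹ * y' * x') = (ς (x'⁻¹ * y'⁻¹ * x' * y'))⁻¹ := by
    have e : (y'⁻¹ * x'⁻¹ * y' * x' : Aˣ) = (x'⁻¹ * y'⁻¹ * x' * y')⁻¹ := by group
    rw [e, hinv _ (hcommN _ _ hDx'y')]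
  have final : ς (x⁻¹ * y⁻¹ * x * y) * (ς (x'⁻¹ * y'⁻¹ * x' * y'))⁻¹ = 1 := by
    have h := t0
    rw [t1, t1', mul_one, t2, t2', mul_one, t3, t4, t4', one_mul, t5, t5', mul_one, t6] at h
    exact h
  exact mul_inv_eq_one.mp final
end

section
/- Let $G$ be a group, $Q$ a normal subgroup, and $V$ an irreducible $\mathbb{C}[G]$-module. Suppose there exists a character $\vartheta : Q \to \mathbb{C}^\times$ with $V(\vartheta) \ne V$, where $V(\vartheta)$ is spanned by $xv - \vartheta(x)v$ for $x \in Q$, $v \in V$. Then the commutator subgroup $[Q,Q]$ acts trivially on $V$. -/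
/-!
If `θ` is multiplicative on `Q`, it kills `⁅Q, Q⁆`, so for `z ∈ ⁅Q, Q⁆` every translate
`ρ g (ρ z v - v) = ρ (g z g⁻¹) (ρ g v) - θ(g z g⁻¹) • ρ g v` lies in `V(θ)`. Hence `ρ z v - v`
lies in the largest `G`-invariant subspace of `V(θ)`, which is `0` by irreducibility since
`V(θ) ≠ V`.
-/

theorem Subgroup.apply_eq_one_of_mem_commutator {G A : Type*} [Group G] [CommGroup A]
    {Q : Subgroup G} {f : G → A} (hf : ∀ x ∈ Q, ∀ y ∈ Q, f (x * y) = f x * f y)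
    {z : G} (hz : z ∈ ⁅Q, Q⁆) : f z = 1 := by
  let φ : Q →* A := MonoidHom.mk' (fun x => f x) fun a b => hf a a.2 b b.2
  rw [← Q.map_subtype_commutator] at hz
  obtain ⟨x, hx, rfl⟩ := hz
  exact Abelianization.commutator_subset_ker φ hx

namespace Representation

variable {k G V : Type*} [CommSemiring k] [Group G] [AddCommGroup V] [Module k V]
  (ρ : Representation k G V)

/-- `V(χ)`: the kernel of the projection onto the largest quotient of `V` on which `Q` acts
through `χ`. -/
def twistedCoinvariantsKer (Q : Subgroup G) (χ : G → k) : Submodule k V :=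
  Submodule.span k {w : V | ∃ x ∈ Q, ∃ v : V, w = ρ x v - χ x • v}

theorem sub_mem_twistedCoinvariantsKer {Q : Subgroup G} {χ : G → k} {x : G} (hx : x ∈ Q)
    (hχ : χ x = 1) (v : V) : ρ x v - v ∈ ρ.twistedCoinvariantsKer Q χ :=
  Submodule.subset_span ⟨x, hx, v, by rw [hχ, one_smul]⟩

def invariantCore (W : Submodule k V) : Submodule k V :=
  ⨅ g : G, W.comap (ρ g)

variable {ρ}

theorem mem_invariantCore {W : Submodule k V} {v : V} :
    v ∈ ρ.invariantCore W ↔ ∀ g, ρ g v ∈ W := by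
  simp only [invariantCore, Submodule.mem_iInf, Submodule.mem_comap]

theorem invariantCore_le (W : Submodule k V) : ρ.invariantCore W ≤ W := fun v hv => by
  simpa using mem_invariantCore.mp hv 1

theorem apply_mem_invariantCore {W : Submodule k V} (g : G) {v : V}
    (hv : v ∈ ρ.invariantCore W) : ρ g v ∈ ρ.invariantCore W :=
  mem_invariantCore.mpr fun h => by simpa using mem_invariantCore.mp hv (h * g)

theorem invariantCore_eq_bot_of_ne_top
    (hirr : ∀ W : Submodule k V, (∀ (g : G), ∀ v ∈ W, ρ g v ∈ W) → W = ⊥ ∨ W = ⊤)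
    {W : Submodule k V} (hW : W ≠ ⊤) : ρ.invariantCore W = ⊥ :=
  (hirr _ fun g _ => apply_mem_invariantCore g).resolve_right fun htop =>
    hW (top_le_iff.mp (htop ▸ invariantCore_le W))

theorem apply_eq_self_of_twistedCoinvariantsKer_ne_top
    (hirr : ∀ W : Submodule k V, (∀ (g : G), ∀ v ∈ W, ρ g v ∈ W) → W = ⊥ ∨ W = ⊤)
    {Q N : Subgroup G} [N.Normal] (hNQ : N ≤ Q) {χ : G → k} (hχ : ∀ z ∈ N, χ z = 1)
    (hne : ρ.twistedCoinvariantsKer Q χ ≠ ⊤) {z : G} (hz : z ∈ N) (v : V) : ρ z v = v := by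
  have hcore : ρ z v - v ∈ ρ.invariantCore (ρ.twistedCoinvariantsKer Q χ) := by
    refine mem_invariantCore.mpr fun g => ?_
    have hconj : g * z * g⁻¹ ∈ N := Subgroup.Normal.conj_mem inferInstance z hz g
    have htranslate : ρ g (ρ z v - v) = ρ (g * z * g⁻¹) (ρ g v) - ρ g v := by
      simp [map_sub, ← Module.End.mul_apply, ← map_mul]
    rw [htranslate]
    exact sub_mem_twistedCoinvariantsKer ρ (hNQ hconj) (hχ _ hconj) (ρ g v)
  rwa [invariantCore_eq_bot_of_ne_top hirr hne, Submodule.mem_bot, sub_eq_zero] at hcore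

end Representation

/-- Let `Q` be a normal subgroup of `G` and `ρ` an irreducible representation of `G` on a
complex vector space `V`.  If there is a character `θ` of `Q` with
`V(θ) = span{x v - θ(x) v} ≠ V`, then the commutator subgroup `[Q, Q]` acts trivially
on `V`. -/
theorem commutator_acts_trivially_of_V_theta_ne_top
    (G : Type*) [Group G] (Q : Subgroup G) [Q.Normal]
    (V : Type*) [AddCommGroup V] [Module ℂ V]
    (ρ : Representation ℂ G V)
    (hirr : ∀ W : Submodule ℂ V, (∀ (g : G), ∀ v ∈ W, ρ g v ∈ W) → W = ⊥ ∨ W = ⊤)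
    (θ : G → ℂˣ) (hθ : ∀ x ∈ Q, ∀ y ∈ Q, θ (x * y) = θ x * θ y)
    (hne : Submodule.span ℂ {w : V | ∃ x ∈ Q, ∃ v : V, w = ρ x v - (θ x : ℂ) • v} ≠ ⊤) :
    ∀ z ∈ ⁅Q, Q⁆, ∀ v : V, ρ z v = v := by
  have hθ_commutator : ∀ z ∈ ⁅Q, Q⁆, (θ z : ℂ) = 1 := fun z hz => by
    rw [Subgroup.apply_eq_one_of_mem_commutator hθ hz, Units.val_one]
  exact fun z hz => ρ.apply_eq_self_of_twistedCoinvariantsKer_ne_top hirr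
    (Subgroup.commutator_le_left Q Q) hθ_commutator hne hz
end
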